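/- The matrix T = M^{-1} U (U^H M^{-1} U)^{-1} U^H M^{-1} + σ^{-2}(I_K − U U^H) − M^{-1}, where M = R + σ² I_K with R positive semi-definite and σ > 0, and U semi-unitary, is Hermitian positive semi-definite. -/

import Mathlib

open Matrix ComplexOrder

/-!
Write `P = 1 - UUᴴ`, `N = M⁻¹` and `Q = NU(UᴴNU)⁻¹UᴴN`. Since `(N - Q)U = 0` and `Uᴴ(N - Q) = 0`,
the difference `N - Q` is supported on the range of `P`, so
`T = σ⁻²P - (N - Q) = P(σ⁻² - N)P + PQP`.
Both summands are positive semidefinite: `σ⁻² - N = N(σ⁻²R² + R)N` with `R ≥ 0`, and `Q ≥ 0`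
because `UᴴNU` is positive definite.
-/

namespace Matrix

variable {n m : Type*}

theorem PosSemidef.posDef_add_smul_one {𝕜 : Type*} [RCLike 𝕜] [DecidableEq n] {R : Matrix n n 𝕜}
    (hR : R.PosSemidef) {c : 𝕜} (hc : 0 < c) : (R + c • 1).PosDef :=
  PosDef.posSemidef_add hR (PosDef.one.smul hc)

variable [Fintype n] [Fintype m] [DecidableEq m]

section CommRing

variable {α : Type*} [CommRing α] [StarRing α] {U : Matrix n m α} {N : Matrix n n α}

-- `Uᴴ * N * U` is the compression of `N` to the range of `U`.
theorem sub_mul_compression_inv_mul_mul_eq_zero (hW : IsUnit (Uᴴ * N * U).det) :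
    (N - N * U * (Uᴴ * N * U)⁻¹ * Uᴴ * N) * U = 0 := by
  rw [Matrix.sub_mul, show N * U * (Uᴴ * N * U)⁻¹ * Uᴴ * N * U
      = N * U * ((Uᴴ * N * U)⁻¹ * (Uᴴ * N * U)) by simp only [Matrix.mul_assoc],
    nonsing_inv_mul _ hW, Matrix.mul_one, sub_self]

theorem conjTranspose_mul_sub_mul_compression_inv_mul_eq_zero (hW : IsUnit (Uᴴ * N * U).det) :
    Uᴴ * (N - N * U * (Uᴴ * N * U)⁻¹ * Uᴴ * N) = 0 := by
  rw [Matrix.mul_sub, show Uᴴ * (N * U * (Uᴴ * N * U)⁻¹ * Uᴴ * N)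
      = (Uᴴ * N * U) * (Uᴴ * N * U)⁻¹ * (Uᴴ * N) by simp only [Matrix.mul_assoc],
    mul_nonsing_inv _ hW, Matrix.one_mul, sub_self]

theorem mul_compression_inv_mul_add_smul_sub_eq [DecidableEq n] (hU : Uᴴ * U = 1)
    (hW : IsUnit (Uᴴ * N * U).det) (c : α) :
    N * U * (Uᴴ * N * U)⁻¹ * Uᴴ * N + c • (1 - U * Uᴴ) - N
      = (1 - U * Uᴴ) * (c • 1 - N) * (1 - U * Uᴴ)
        + (1 - U * Uᴴ) * (N * U * (Uᴴ * N * U)⁻¹ * Uᴴ * N) * (1 - U * Uᴴ) := by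
  set P := 1 - U * Uᴴ
  set Q := N * U * (Uᴴ * N * U)⁻¹ * Uᴴ * N
  have hPP : P * P = P := by
    simp only [P, Matrix.sub_mul, Matrix.mul_sub, Matrix.one_mul, Matrix.mul_one,
      ← Matrix.mul_assoc, Matrix.mul_assoc U Uᴴ U, hU]
    abel
  have hPD : P * (N - Q) = N - Q := by
    rw [Matrix.sub_mul, Matrix.one_mul, Matrix.mul_assoc,
      conjTranspose_mul_sub_mul_compression_inv_mul_eq_zero hW, Matrix.mul_zero, sub_zero]
  have hDP : (N - Q) * P = N - Q := by
    rw [Matrix.mul_sub, Matrix.mul_one, ← Matrix.mul_assoc,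
      sub_mul_compression_inv_mul_mul_eq_zero hW, Matrix.zero_mul, sub_zero]
  calc Q + c • P - N = c • (P * P) - P * (N - Q) * P := by rw [hPP, hPD, hDP]; abel
    _ = P * (c • 1 - N) * P + P * Q * P := by
      simp only [Matrix.mul_sub, Matrix.sub_mul, Matrix.mul_smul, Matrix.smul_mul, Matrix.mul_one]
      abel

end CommRing

section RCLike

variable {𝕜 : Type*} [RCLike 𝕜]

theorem mulVec_injective_of_conjTranspose_mul_eq_one {U : Matrix n m 𝕜} (hU : Uᴴ * U = 1) :
    Function.Injective U.mulVec :=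
  Function.LeftInverse.injective (g := (Uᴴ *ᵥ ·)) fun x => by simp [mulVec_mulVec, hU]

theorem PosDef.conjTranspose_mul_mul_of_conjTranspose_mul_eq_one {N : Matrix n n 𝕜}
    {U : Matrix n m 𝕜} (hN : N.PosDef) (hU : Uᴴ * U = 1) : (Uᴴ * N * U).PosDef :=
  hN.conjTranspose_mul_mul_same (mulVec_injective_of_conjTranspose_mul_eq_one hU)

theorem PosDef.posSemidef_mul_compression_inv_mul {N : Matrix n n 𝕜} {U : Matrix n m 𝕜}
    (hN : N.PosDef) (hU : Uᴴ * U = 1) : (N * U * (Uᴴ * N * U)⁻¹ * Uᴴ * N).PosSemidef := by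
  have hW := hN.conjTranspose_mul_mul_of_conjTranspose_mul_eq_one hU
  simpa only [conjTranspose_mul, hN.isHermitian.eq, Matrix.mul_assoc] using
    hW.inv.posSemidef.mul_mul_conjTranspose_same (N * U)

theorem PosSemidef.mul_mul_same_of_isHermitian {A P : Matrix n n 𝕜} (hA : A.PosSemidef)
    (hP : P.IsHermitian) : (P * A * P).PosSemidef := by
  simpa only [hP.eq] using hA.mul_mul_conjTranspose_same P

variable [DecidableEq n] {R : Matrix n n 𝕜} {c : 𝕜}

theorem PosSemidef.posSemidef_inv_smul_one_sub_inv_add_smul_one (hR : R.PosSemidef) (hc : 0 < c) :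
    (c⁻¹ • 1 - (R + c • 1)⁻¹).PosSemidef := by
  set M := R + c • 1
  have hMpd : M.PosDef := hR.posDef_add_smul_one hc
  have hM : IsUnit M.det := (isUnit_iff_isUnit_det M).mp hMpd.isUnit
  have hsq : c⁻¹ • (M * M) - M = c⁻¹ • (Rᴴ * R) + R := by
    simp only [M, hR.isHermitian.eq, Matrix.mul_add, Matrix.add_mul, Matrix.smul_mul,
      Matrix.mul_smul, Matrix.mul_one, Matrix.one_mul, smul_add, smul_smul,
      inv_mul_cancel₀ hc.ne', inv_mul_cancel_left₀ hc.ne', one_smul]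
    abel
  have hconj : c⁻¹ • 1 - M⁻¹ = M⁻¹ᴴ * (c⁻¹ • (M * M) - M) * M⁻¹ := by
    rw [hMpd.inv.isHermitian.eq]
    simp only [Matrix.mul_sub, Matrix.sub_mul, Matrix.mul_smul, Matrix.smul_mul,
      ← Matrix.mul_assoc, nonsing_inv_mul _ hM, Matrix.one_mul, mul_nonsing_inv _ hM]
  rw [hconj, hsq]
  exact (((posSemidef_conjTranspose_mul_self R).smul (inv_pos.mpr hc).le).add hR)
    |>.conjTranspose_mul_mul_same _

end RCLike

end Matrix

/-- The GLRT matrix `T = M⁻¹U(UᴴM⁻¹U)⁻¹UᴴM⁻¹ + σ⁻²(I - UUᴴ) - M⁻¹`, with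
`M = R + σ²I`, `R` PSD, `σ > 0`, `U` semi-unitary, is positive semi-definite. -/
theorem stmt3 {K r : ℕ} (R : Matrix (Fin K) (Fin K) ℂ) (hR : R.PosSemidef)
    (σ : ℝ) (hσ : 0 < σ)
    (U : Matrix (Fin K) (Fin r) ℂ) (hU : Uᴴ * U = 1)
    (M : Matrix (Fin K) (Fin K) ℂ) (hM : M = R + ((σ ^ 2 : ℂ) • (1 : Matrix (Fin K) (Fin K) ℂ))) :
    (M⁻¹ * U * (Uᴴ * M⁻¹ * U)⁻¹ * Uᴴ * M⁻¹
      + ((σ : ℂ) ^ 2)⁻¹ • ((1 : Matrix (Fin K) (Fin K) ℂ) - U * Uᴴ)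
      - M⁻¹).PosSemidef := by
  subst hM
  have hc : (0 : ℂ) < (σ : ℂ) ^ 2 := pow_pos (Complex.zero_lt_real.mpr hσ) 2
  have hN := (hR.posDef_add_smul_one hc).inv
  have hW := (isUnit_iff_isUnit_det _).mp
    (hN.conjTranspose_mul_mul_of_conjTranspose_mul_eq_one hU).isUnit
  have hP : (1 - U * Uᴴ).IsHermitian := isHermitian_one.sub (isHermitian_mul_conjTranspose_self U)
  rw [mul_compression_inv_mul_add_smul_sub_eq hU hW]
  exact ((hR.posSemidef_inv_smul_one_sub_inv_add_smul_one hc).mul_mul_same_of_isHermitian hP).add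
    ((hN.posSemidef_mul_compression_inv_mul hU).mul_mul_same_of_isHermitian hP)
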